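/- Sufficient optimality condition for single-step computations (Theorem 1): In the single-step computation model, let (φ,t⁻,t⁺) be feasible for r with marginal vectors λ⁻, λ⁺. Suppose that for every i ∈ V, every task (d,m), and every j ∈ {0} ∪ N(i): if φ⁻_{ij}(d,m) > 0 then δ⁻_{ij}(d,m) = min_{k ∈ {0}∪N(i)} δ⁻_{ik}(d,m); and for every j ∈ N(i): if φ⁺_{ij}(d,m) > 0 then δ⁺_{ij}(d,m) = min_{k ∈ N(i)} δ⁺_{ik}(d,m). Then (φ,t⁻,t⁺) is globally optimal: T(φ) ≤ T(φ†) for every triple (φ†,t⁻†,t⁺†) feasible for the same input rates r. -/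

import Mathlib

open scoped BigOperators
open Classical

/-- The single-step computation network model: a finite directed graph, a finite set
of tasks `(d,m)` (destination, computation type), data/result packet sizes,
computation weights, and nondecreasing convex continuously differentiable link and
computation cost functions (with their derivatives). -/
structure SSNet where
  /-- the node type -/
  V : Type
  /-- the computation-type type -/
  M : Type
  fV : Fintype V
  dV : DecidableEq V
  fM : Fintype M
  /-- the edge relation -/
  E : V → V → Prop
  /-- the finite set of tasks `(d,m)` -/
  Tsk : Finset (V × M)
  /-- data packet size `L⁻_m` -/
  Lm : M → ℝ
  /-- result packet size `L⁺_m` -/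
  Lp : M → ℝ
  hLm : ∀ m, 0 < Lm m
  hLp : ∀ m, 0 < Lp m
  /-- computation weights `w_{im}` -/
  w : V → M → ℝ
  hw : ∀ i m, 0 < w i m
  /-- link cost functions -/
  D : V → V → ℝ → ℝ
  /-- derivative of the link cost functions -/
  D' : V → V → ℝ → ℝ
  /-- computation cost functions -/
  C : V → ℝ → ℝ
  /-- derivative of the computation cost functions -/
  C' : V → ℝ → ℝ
  hD_mono : ∀ i j, E i j → MonotoneOn (D i j) (Set.Ici 0)
  hD_conv : ∀ i j, E i j → ConvexOn ℝ (Set.Ici 0) (D i j)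
  hD_deriv : ∀ i j, E i j → ∀ x ∈ Set.Ici (0 : ℝ),
    HasDerivWithinAt (D i j) (D' i j x) (Set.Ici 0) x
  hD'_cont : ∀ i j, E i j → ContinuousOn (D' i j) (Set.Ici 0)
  hC_mono : ∀ i, MonotoneOn (C i) (Set.Ici 0)
  hC_conv : ∀ i, ConvexOn ℝ (Set.Ici 0) (C i)
  hC_deriv : ∀ i, ∀ x ∈ Set.Ici (0 : ℝ),
    HasDerivWithinAt (C i) (C' i x) (Set.Ici 0) x
  hC'_cont : ∀ i, ContinuousOn (C' i) (Set.Ici 0)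

/-- Sum of a real-valued function over all nodes. -/
noncomputable def SSNet.sumV (N : SSNet) (f : N.V → ℝ) : ℝ :=
  letI := N.fV
  ∑ j, f j

/-- A forwarding strategy for single-step computations: `φm i (some j) τ` (resp.
`φm i none τ`) is the fraction of data traffic of task `τ` forwarded by `i` to node
`j` (resp. to `i`'s CPU), and `φp i j τ` is the fraction of result traffic of task
`τ` forwarded by `i` to `j`. -/
structure SSStrategy (N : SSNet) (φm : N.V → Option N.V → N.V × N.M → ℝ)
    (φp : N.V → N.V → N.V × N.M → ℝ) : Prop where
  m_nonneg : ∀ i j τ, 0 ≤ φm i j τ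
  m_le_one : ∀ i j τ, φm i j τ ≤ 1
  p_nonneg : ∀ i j τ, 0 ≤ φp i j τ
  p_le_one : ∀ i j τ, φp i j τ ≤ 1
  m_no_edge : ∀ i j τ, ¬ N.E i j → φm i (some j) τ = 0
  p_no_edge : ∀ i j τ, ¬ N.E i j → φp i j τ = 0
  m_sum : ∀ i, ∀ τ ∈ N.Tsk, φm i none τ + N.sumV (fun j => φm i (some j) τ) = 1
  p_sum : ∀ i, ∀ τ ∈ N.Tsk, i ≠ τ.1 → N.sumV (fun j => φp i j τ) = 1
  p_dest : ∀ τ ∈ N.Tsk, N.sumV (fun j => φp τ.1 j τ) = 0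

/-- Traffic vectors `t⁻, t⁺` for input rates `r` and strategy `(φm,φp)`. -/
structure SSTraffic (N : SSNet) (r : N.V → N.V × N.M → ℝ)
    (φm : N.V → Option N.V → N.V × N.M → ℝ) (φp : N.V → N.V → N.V × N.M → ℝ)
    (tm tp : N.V → N.V × N.M → ℝ) : Prop where
  tm_nonneg : ∀ i τ, 0 ≤ tm i τ
  tp_nonneg : ∀ i τ, 0 ≤ tp i τ
  tm_eq : ∀ i, ∀ τ ∈ N.Tsk,
    tm i τ = r i τ + N.sumV (fun j => tm j τ * φm j (some i) τ)
  tp_eq : ∀ i, ∀ τ ∈ N.Tsk,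
    tp i τ = tm i τ * φm i none τ + N.sumV (fun j => tp j τ * φp j i τ)

/-- A feasible triple (strategy, data traffic, result traffic) for input rates `r`. -/
def SSFeasible (N : SSNet) (r : N.V → N.V × N.M → ℝ)
    (φm : N.V → Option N.V → N.V × N.M → ℝ) (φp : N.V → N.V → N.V × N.M → ℝ)
    (tm tp : N.V → N.V × N.M → ℝ) : Prop :=
  SSStrategy N φm φp ∧ SSTraffic N r φm φp tm tp

/-- Total flow (bit/sec) on link `(i,j)`. -/
noncomputable def ssF (N : SSNet) (φm : N.V → Option N.V → N.V × N.M → ℝ)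
    (φp : N.V → N.V → N.V × N.M → ℝ) (tm tp : N.V → N.V × N.M → ℝ)
    (i j : N.V) : ℝ :=
  ∑ τ ∈ N.Tsk, (N.Lm τ.2 * (tm i τ * φm i (some j) τ)
    + N.Lp τ.2 * (tp i τ * φp i j τ))

/-- Total computation workload at node `i`. -/
noncomputable def ssG (N : SSNet) (φm : N.V → Option N.V → N.V × N.M → ℝ)
    (tm : N.V → N.V × N.M → ℝ) (i : N.V) : ℝ :=
  ∑ τ ∈ N.Tsk, N.w i τ.2 * (tm i τ * φm i none τ)

/-- The aggregated communication and computation cost `T(φ)`. -/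
noncomputable def ssT (N : SSNet) (φm : N.V → Option N.V → N.V × N.M → ℝ)
    (φp : N.V → N.V → N.V × N.M → ℝ) (tm tp : N.V → N.V × N.M → ℝ) : ℝ :=
  letI := N.fV
  (∑ i, ∑ j, if N.E i j then N.D i j (ssF N φm φp tm tp i j) else 0)
    + ∑ i, N.C i (ssG N φm tm i)

/-- Marginal-cost vectors `λ⁻, λ⁺` for the triple `(φ,t⁻,t⁺)`. -/
structure SSMarginal (N : SSNet) (φm : N.V → Option N.V → N.V × N.M → ℝ)
    (φp : N.V → N.V → N.V × N.M → ℝ) (tm tp : N.V → N.V × N.M → ℝ)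
    (lm lp : N.V → N.V × N.M → ℝ) : Prop where
  lp_eq : ∀ i, ∀ τ ∈ N.Tsk,
    lp i τ = N.sumV (fun j =>
      φp i j τ * (N.Lp τ.2 * N.D' i j (ssF N φm φp tm tp i j) + lp j τ))
  lm_eq : ∀ i, ∀ τ ∈ N.Tsk,
    lm i τ = N.sumV (fun j =>
        φm i (some j) τ * (N.Lm τ.2 * N.D' i j (ssF N φm φp tm tp i j) + lm j τ))
      + φm i none τ * (N.w i τ.2 * N.C' i (ssG N φm tm i) + lp i τ)

/-- Admissible directions for data flow at node `i`: out-neighbors and the CPU. -/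
def SSAdm (N : SSNet) (i : N.V) : Option N.V → Prop
  | some j => N.E i j
  | none => True

/-- The modified data marginals `δ⁻_{ij}(d,m)`. -/
noncomputable def ssDm (N : SSNet) (φm : N.V → Option N.V → N.V × N.M → ℝ)
    (φp : N.V → N.V → N.V × N.M → ℝ) (tm tp : N.V → N.V × N.M → ℝ)
    (lm lp : N.V → N.V × N.M → ℝ) (i : N.V) (τ : N.V × N.M) :
    Option N.V → ℝ
  | some j => N.Lm τ.2 * N.D' i j (ssF N φm φp tm tp i j) + lm j τ
  | none => N.w i τ.2 * N.C' i (ssG N φm tm i) + lp i τ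

/-- The modified result marginals `δ⁺_{ij}(d,m)`. -/
noncomputable def ssDp (N : SSNet) (φm : N.V → Option N.V → N.V × N.M → ℝ)
    (φp : N.V → N.V → N.V × N.M → ℝ) (tm tp : N.V → N.V × N.M → ℝ)
    (lp : N.V → N.V × N.M → ℝ) (i j : N.V) (τ : N.V × N.M) : ℝ :=
  N.Lp τ.2 * N.D' i j (ssF N φm φp tm tp i j) + lp j τ

/-- The KKT stationarity condition for single-step computations: for data flows,
used directions minimize `t⁻_i·δ⁻_{ij}` over `{0} ∪ N(i)` and unused ones lie above
that minimum; analogously for result flows with `t⁺_i·δ⁺_{ij}` over `N(i)`. -/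
def SSKKT (N : SSNet) (φm : N.V → Option N.V → N.V × N.M → ℝ)
    (φp : N.V → N.V → N.V × N.M → ℝ) (tm tp : N.V → N.V × N.M → ℝ)
    (lm lp : N.V → N.V × N.M → ℝ) : Prop :=
  (∀ i, ∀ τ ∈ N.Tsk, ∀ j, SSAdm N i j →
    (0 < φm i j τ → ∀ j', SSAdm N i j' →
      tm i τ * ssDm N φm φp tm tp lm lp i τ j
        ≤ tm i τ * ssDm N φm φp tm tp lm lp i τ j')
    ∧ (φm i j τ = 0 → ∃ j', SSAdm N i j' ∧
      tm i τ * ssDm N φm φp tm tp lm lp i τ j'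
        ≤ tm i τ * ssDm N φm φp tm tp lm lp i τ j))
  ∧ (∀ i, ∀ τ ∈ N.Tsk, ∀ j, N.E i j →
    (0 < φp i j τ → ∀ j', N.E i j' →
      tp i τ * ssDp N φm φp tm tp lp i j τ ≤ tp i τ * ssDp N φm φp tm tp lp i j' τ)
    ∧ (φp i j τ = 0 → ∃ j', N.E i j' ∧
      tp i τ * ssDp N φm φp tm tp lp i j' τ ≤ tp i τ * ssDp N φm φp tm tp lp i j τ))

/-! By convexity of the link and computation costs, `T(φ') - T(φ)` is at least the first-order
change `∑ D'_{ij}(F_{ij}) (F'_{ij} - F_{ij}) + ∑ C'_i(G_i) (G'_i - G_i)`. Flow conservation lets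
the first-order cost of any feasible `φ'` be priced at the marginals: it equals `∑ r_i λ⁻_i` plus
the surplus `∑ t'⁻_i (∑_j φ'⁻_{ij} δ⁻_{ij} - λ⁻_i) + t'⁺_i (∑_j φ'⁺_{ij} δ⁺_{ij} - λ⁺_i)`. The
surplus of `φ` itself vanishes by the marginal equations, and under the optimality condition
`λ⁻_i` and `λ⁺_i` are the minima of the `δ_{ij}`, so the surplus of every `φ'` is nonnegative. -/

attribute [local instance] SSNet.fV

theorem ConvexOn.add_mul_sub_le_of_hasDerivWithinAt {S : Set ℝ} {f : ℝ → ℝ} {f' x y : ℝ}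
    (hf : ConvexOn ℝ S f) (hx : x ∈ S) (hy : y ∈ S) (hd : HasDerivWithinAt f f' S x) :
    f x + f' * (y - x) ≤ f y := by
  rcases lt_trichotomy x y with hxy | rfl | hxy
  · have h := hf.le_slope_of_hasDerivWithinAt hx hy hxy hd
    rw [slope_def_field, le_div_iff₀ (sub_pos.2 hxy)] at h
    linarith
  · simp
  · have h := hf.slope_le_of_hasDerivWithinAt hy hx hxy hd
    rw [slope_def_field, div_le_iff₀ (sub_pos.2 hxy)] at h
    linarith

section WeightedSum

variable {ι : Type*} [Fintype ι] {w f : ι → ℝ} {b : ℝ}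

theorem sum_mul_le_of_forall_pos (hw : ∀ i, 0 ≤ w i) (hw1 : ∑ i, w i = 1)
    (hf : ∀ i, 0 < w i → f i ≤ b) : ∑ i, w i * f i ≤ b := by
  calc ∑ i, w i * f i ≤ ∑ i, w i * b := by
        refine Finset.sum_le_sum fun i _ => ?_
        rcases (hw i).eq_or_lt with h | h
        · simp [← h]
        · exact mul_le_mul_of_nonneg_left (hf i h) h.le
    _ = b := by rw [← Finset.sum_mul, hw1, one_mul]

theorem le_sum_mul_of_forall_pos (hw : ∀ i, 0 ≤ w i) (hw1 : ∑ i, w i = 1)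
    (hf : ∀ i, 0 < w i → b ≤ f i) : b ≤ ∑ i, w i * f i := by
  have h := sum_mul_le_of_forall_pos (f := fun i => -f i) (b := -b) hw hw1
    fun i hi => neg_le_neg (hf i hi)
  simp only [mul_neg, Finset.sum_neg_distrib] at h
  linarith

end WeightedSum

theorem sum_mul_eq_of_conservation {ι : Type*} [Fintype ι] {t s : ι → ℝ} {φ : ι → ι → ℝ}
    (h : ∀ j, t j = s j + ∑ i, t i * φ i j) (p : ι → ℝ) :
    ∑ j, t j * p j = ∑ j, s j * p j + ∑ i, t i * ∑ j, φ i j * p j := by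
  simp_rw [Finset.mul_sum]
  conv_lhs => enter [2, j]; rw [h j, add_mul, Finset.sum_mul]
  rw [Finset.sum_add_distrib, Finset.sum_comm (s := Finset.univ) (t := Finset.univ)]
  simp only [mul_assoc]

section Network

variable {N : SSNet} {r r' : N.V → N.V × N.M → ℝ}
  {φm φm' : N.V → Option N.V → N.V × N.M → ℝ} {φp φp' : N.V → N.V → N.V × N.M → ℝ}
  {tm tp tm' tp' lm lp : N.V → N.V × N.M → ℝ} {i : N.V} {τ : N.V × N.M}

namespace SSStrategy

theorem sum_m_eq_one (hS : SSStrategy N φm φp) (hτ : τ ∈ N.Tsk) : ∑ x, φm i x τ = 1 := by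
  rw [Fintype.sum_option]
  exact hS.m_sum i τ hτ

theorem adm_of_m_pos (hS : SSStrategy N φm φp) {x : Option N.V} (h : 0 < φm i x τ) :
    SSAdm N i x := by
  cases x with
  | none => trivial
  | some j => exact by_contra fun hij => h.ne' (hS.m_no_edge i j τ hij)

theorem edge_of_p_pos (hS : SSStrategy N φm φp) {j : N.V} (h : 0 < φp i j τ) : N.E i j :=
  by_contra fun hij => h.ne' (hS.p_no_edge i j τ hij)

theorem p_dest_eq_zero (hS : SSStrategy N φm φp) (hτ : τ ∈ N.Tsk) (j : N.V) :
    φp τ.1 j τ = 0 :=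
  (Finset.sum_eq_zero_iff_of_nonneg fun k _ => hS.p_nonneg τ.1 k τ).1 (hS.p_dest τ hτ) j
    (Finset.mem_univ j)

theorem ssF_eq_zero_of_not_edge (hS : SSStrategy N φm φp) {i j : N.V} (hij : ¬ N.E i j) :
    ssF N φm φp tm tp i j = 0 :=
  Finset.sum_eq_zero fun τ _ => by simp [hS.m_no_edge i j τ hij, hS.p_no_edge i j τ hij]

end SSStrategy

namespace SSFeasible

theorem ssF_nonneg (h : SSFeasible N r φm φp tm tp) (i j : N.V) : 0 ≤ ssF N φm φp tm tp i j :=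
  Finset.sum_nonneg fun τ _ => add_nonneg
    (mul_nonneg (N.hLm τ.2).le (mul_nonneg (h.2.tm_nonneg i τ) (h.1.m_nonneg i (some j) τ)))
    (mul_nonneg (N.hLp τ.2).le (mul_nonneg (h.2.tp_nonneg i τ) (h.1.p_nonneg i j τ)))

theorem ssG_nonneg (h : SSFeasible N r φm φp tm tp) (i : N.V) : 0 ≤ ssG N φm tm i :=
  Finset.sum_nonneg fun τ _ =>
    mul_nonneg (N.hw i τ.2).le (mul_nonneg (h.2.tm_nonneg i τ) (h.1.m_nonneg i none τ))


end SSFeasible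

namespace SSMarginal

theorem lm_eq_sum (hM : SSMarginal N φm φp tm tp lm lp) (hτ : τ ∈ N.Tsk) :
    lm i τ = ∑ x, φm i x τ * ssDm N φm φp tm tp lm lp i τ x := by
  rw [hM.lm_eq i τ hτ, Fintype.sum_option, add_comm]
  rfl

theorem lp_eq_sum (hM : SSMarginal N φm φp tm tp lm lp) (hτ : τ ∈ N.Tsk) :
    lp i τ = ∑ j, φp i j τ * ssDp N φm φp tm tp lp i j τ :=
  hM.lp_eq i τ hτ

theorem lp_dest_eq_zero (hM : SSMarginal N φm φp tm tp lm lp) (hS : SSStrategy N φm φp)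
    (hτ : τ ∈ N.Tsk) : lp τ.1 τ = 0 := by
  simp [hM.lp_eq_sum hτ, hS.p_dest_eq_zero hτ]

theorem lm_le_ssDm (hM : SSMarginal N φm φp tm tp lm lp) (hS : SSStrategy N φm φp)
    (hτ : τ ∈ N.Tsk)
    (hmin : ∀ j, SSAdm N i j → 0 < φm i j τ → ∀ j', SSAdm N i j' →
      ssDm N φm φp tm tp lm lp i τ j ≤ ssDm N φm φp tm tp lm lp i τ j')
    {k : Option N.V} (hk : SSAdm N i k) : lm i τ ≤ ssDm N φm φp tm tp lm lp i τ k := by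
  rw [hM.lm_eq_sum hτ]
  exact sum_mul_le_of_forall_pos (hS.m_nonneg i · τ) (hS.sum_m_eq_one hτ)
    fun x hx => hmin x (hS.adm_of_m_pos hx) hx k hk

theorem lp_le_ssDp (hM : SSMarginal N φm φp tm tp lm lp) (hS : SSStrategy N φm φp)
    (hτ : τ ∈ N.Tsk) (hi : i ≠ τ.1)
    (hmin : ∀ j, N.E i j → 0 < φp i j τ → ∀ j', N.E i j' →
      ssDp N φm φp tm tp lp i j τ ≤ ssDp N φm φp tm tp lp i j' τ)
    {k : N.V} (hk : N.E i k) : lp i τ ≤ ssDp N φm φp tm tp lp i k τ := by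
  rw [hM.lp_eq_sum hτ]
  exact sum_mul_le_of_forall_pos (hS.p_nonneg i · τ) (hS.p_sum i τ hτ hi)
    fun j hj => hmin j (hS.edge_of_p_pos hj) hj k hk

theorem lm_le_sum_ssDm (hM : SSMarginal N φm φp tm tp lm lp) (hS : SSStrategy N φm φp)
    (hS' : SSStrategy N φm' φp') (hτ : τ ∈ N.Tsk)
    (hmin : ∀ j, SSAdm N i j → 0 < φm i j τ → ∀ j', SSAdm N i j' →
      ssDm N φm φp tm tp lm lp i τ j ≤ ssDm N φm φp tm tp lm lp i τ j') :
    lm i τ ≤ ∑ x, φm' i x τ * ssDm N φm φp tm tp lm lp i τ x :=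
  le_sum_mul_of_forall_pos (hS'.m_nonneg i · τ) (hS'.sum_m_eq_one hτ)
    fun _ hx => hM.lm_le_ssDm hS hτ hmin (hS'.adm_of_m_pos hx)

theorem lp_le_sum_ssDp (hM : SSMarginal N φm φp tm tp lm lp) (hS : SSStrategy N φm φp)
    (hS' : SSStrategy N φm' φp') (hτ : τ ∈ N.Tsk)
    (hmin : ∀ j, N.E i j → 0 < φp i j τ → ∀ j', N.E i j' →
      ssDp N φm φp tm tp lp i j τ ≤ ssDp N φm φp tm tp lp i j' τ) :
    lp i τ ≤ ∑ j, φp' i j τ * ssDp N φm φp tm tp lp i j τ := by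
  by_cases hi : i = τ.1
  · subst hi
    simp [hM.lp_dest_eq_zero hS hτ, hS'.p_dest_eq_zero hτ]
  · exact le_sum_mul_of_forall_pos (hS'.p_nonneg i · τ) (hS'.p_sum i τ hτ hi)
      fun _ hj => hM.lp_le_ssDp hS hτ hi hmin (hS'.edge_of_p_pos hj)

end SSMarginal

noncomputable def ssTLin (N : SSNet) (φm : N.V → Option N.V → N.V × N.M → ℝ)
    (φp : N.V → N.V → N.V × N.M → ℝ) (tm tp : N.V → N.V × N.M → ℝ)
    (φm' : N.V → Option N.V → N.V × N.M → ℝ) (φp' : N.V → N.V → N.V × N.M → ℝ)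
    (tm' tp' : N.V → N.V × N.M → ℝ) : ℝ :=
  ∑ i, ∑ j, N.D' i j (ssF N φm φp tm tp i j) * ssF N φm' φp' tm' tp' i j
    + ∑ i, N.C' i (ssG N φm tm i) * ssG N φm' tm' i

noncomputable def ssSurplus (N : SSNet) (φm : N.V → Option N.V → N.V × N.M → ℝ)
    (φp : N.V → N.V → N.V × N.M → ℝ) (tm tp lm lp : N.V → N.V × N.M → ℝ)
    (φm' : N.V → Option N.V → N.V × N.M → ℝ) (φp' : N.V → N.V → N.V × N.M → ℝ)
    (tm' tp' : N.V → N.V × N.M → ℝ) (τ : N.V × N.M) : ℝ :=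
  ∑ i, (tm' i τ * (∑ x, φm' i x τ * ssDm N φm φp tm tp lm lp i τ x - lm i τ)
    + tp' i τ * (∑ j, φp' i j τ * ssDp N φm φp tm tp lp i j τ - lp i τ))

theorem SSTraffic.ssSurplus_eq (hT : SSTraffic N r φm' φp' tm' tp') (hτ : τ ∈ N.Tsk) :
    ssSurplus N φm φp tm tp lm lp φm' φp' tm' tp' τ
      = ∑ i, (tm' i τ * (φm' i none τ * (N.w i τ.2 * N.C' i (ssG N φm tm i)))
          + ∑ j, (tm' i τ * (φm' i (some j) τ * (N.Lm τ.2 * N.D' i j (ssF N φm φp tm tp i j)))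
            + tp' i τ * (φp' i j τ * (N.Lp τ.2 * N.D' i j (ssF N φm φp tm tp i j)))))
        - ∑ i, r i τ * lm i τ := by
  have hdata := sum_mul_eq_of_conservation (t := (tm' · τ)) (φ := fun i j => φm' i (some j) τ)
    (fun j => hT.tm_eq j τ hτ) (lm · τ)
  have hres := sum_mul_eq_of_conservation (t := (tp' · τ)) (φ := fun i j => φp' i j τ)
    (fun j => hT.tp_eq j τ hτ) (lp · τ)
  simp only [ssSurplus, ssDm, ssDp, Fintype.sum_option, mul_add, mul_sub, Finset.mul_sum,
    Finset.sum_add_distrib, Finset.sum_sub_distrib, mul_assoc] at hdata hres ⊢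
  linarith

theorem SSTraffic.ssTLin_eq (hT : SSTraffic N r φm' φp' tm' tp') :
    ssTLin N φm φp tm tp φm' φp' tm' tp'
      = ∑ τ ∈ N.Tsk, ∑ i, r i τ * lm i τ
        + ∑ τ ∈ N.Tsk, ssSurplus N φm φp tm tp lm lp φm' φp' tm' tp' τ := by
  rw [← Finset.sum_add_distrib, Finset.sum_congr rfl fun τ hτ => by
    rw [hT.ssSurplus_eq hτ, add_sub_cancel]]
  simp only [ssTLin, ssF.eq_1 N φm' φp' tm' tp', ssG.eq_1 N φm' tm', Finset.mul_sum, mul_add,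
    Finset.sum_add_distrib, Finset.sum_comm (s := N.Tsk)]
  simp only [mul_assoc, mul_comm, mul_left_comm]
  ring

theorem SSMarginal.ssSurplus_self_eq_zero (hM : SSMarginal N φm φp tm tp lm lp)
    (hτ : τ ∈ N.Tsk) : ssSurplus N φm φp tm tp lm lp φm φp tm tp τ = 0 :=
  Finset.sum_eq_zero fun _ _ => by rw [← hM.lm_eq_sum hτ, ← hM.lp_eq_sum hτ]; ring

theorem SSMarginal.ssSurplus_nonneg (hM : SSMarginal N φm φp tm tp lm lp)
    (hS : SSStrategy N φm φp) (hS' : SSStrategy N φm' φp') (hT' : SSTraffic N r φm' φp' tm' tp')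
    (hτ : τ ∈ N.Tsk)
    (hmin_m : ∀ i, ∀ j, SSAdm N i j → 0 < φm i j τ → ∀ j', SSAdm N i j' →
      ssDm N φm φp tm tp lm lp i τ j ≤ ssDm N φm φp tm tp lm lp i τ j')
    (hmin_p : ∀ i, ∀ j, N.E i j → 0 < φp i j τ → ∀ j', N.E i j' →
      ssDp N φm φp tm tp lp i j τ ≤ ssDp N φm φp tm tp lp i j' τ) :
    0 ≤ ssSurplus N φm φp tm tp lm lp φm' φp' tm' tp' τ :=
  Finset.sum_nonneg fun i _ => add_nonneg
    (mul_nonneg (hT'.tm_nonneg i τ) (sub_nonneg.2 (hM.lm_le_sum_ssDm hS hS' hτ (hmin_m i))))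
    (mul_nonneg (hT'.tp_nonneg i τ) (sub_nonneg.2 (hM.lp_le_sum_ssDp hS hS' hτ (hmin_p i))))

theorem ssT_add_ssTLin_sub_le (h : SSFeasible N r φm φp tm tp)
    (h' : SSFeasible N r' φm' φp' tm' tp') :
    ssT N φm φp tm tp + (ssTLin N φm φp tm tp φm' φp' tm' tp' - ssTLin N φm φp tm tp φm φp tm tp)
      ≤ ssT N φm' φp' tm' tp' := by
  have hlink : ∀ i j, (if N.E i j then N.D i j (ssF N φm φp tm tp i j) else 0)
      + N.D' i j (ssF N φm φp tm tp i j) * (ssF N φm' φp' tm' tp' i j - ssF N φm φp tm tp i j)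
      ≤ if N.E i j then N.D i j (ssF N φm' φp' tm' tp' i j) else 0 := by
    intro i j
    by_cases hij : N.E i j
    · simp only [if_pos hij]
      exact (N.hD_conv i j hij).add_mul_sub_le_of_hasDerivWithinAt (h.ssF_nonneg i j)
        (h'.ssF_nonneg i j) (N.hD_deriv i j hij _ (h.ssF_nonneg i j))
    · simp [hij, h.1.ssF_eq_zero_of_not_edge hij, h'.1.ssF_eq_zero_of_not_edge hij]
  have hnode : ∀ i, N.C i (ssG N φm tm i)
      + N.C' i (ssG N φm tm i) * (ssG N φm' tm' i - ssG N φm tm i) ≤ N.C i (ssG N φm' tm' i) :=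
    fun i => (N.hC_conv i).add_mul_sub_le_of_hasDerivWithinAt (h.ssG_nonneg i)
      (h'.ssG_nonneg i) (N.hC_deriv i _ (h.ssG_nonneg i))
  have hD := Finset.sum_le_sum fun i (_ : i ∈ Finset.univ) =>
    Finset.sum_le_sum fun j (_ : j ∈ Finset.univ) => hlink i j
  have hC := Finset.sum_le_sum fun i (_ : i ∈ Finset.univ) => hnode i
  simp only [mul_sub, Finset.sum_add_distrib, Finset.sum_sub_distrib] at hD hC
  simp only [ssT, ssTLin]
  linarith

end Network

theorem sufficient_optimality_single_step_general
    (N : SSNet) (r : N.V → N.V × N.M → ℝ)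
    (φm : N.V → Option N.V → N.V × N.M → ℝ) (φp : N.V → N.V → N.V × N.M → ℝ)
    (tm tp : N.V → N.V × N.M → ℝ) (lm lp : N.V → N.V × N.M → ℝ)
    (hfeas : SSFeasible N r φm φp tm tp)
    (hlam : SSMarginal N φm φp tm tp lm lp)
    (hsuff_m : ∀ i, ∀ τ ∈ N.Tsk, ∀ j, SSAdm N i j → 0 < φm i j τ →
      ∀ j', SSAdm N i j' →
        ssDm N φm φp tm tp lm lp i τ j ≤ ssDm N φm φp tm tp lm lp i τ j')
    (hsuff_p : ∀ i, ∀ τ ∈ N.Tsk, ∀ j, N.E i j → 0 < φp i j τ →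
      ∀ j', N.E i j' →
        ssDp N φm φp tm tp lp i j τ ≤ ssDp N φm φp tm tp lp i j' τ) :
    ∀ (φm' : N.V → Option N.V → N.V × N.M → ℝ) (φp' : N.V → N.V → N.V × N.M → ℝ)
      (tm' tp' : N.V → N.V × N.M → ℝ),
      SSFeasible N r φm' φp' tm' tp' →
      ssT N φm φp tm tp ≤ ssT N φm' φp' tm' tp' := by
  intro φm' φp' tm' tp' hfeas'
  have hself : ssTLin N φm φp tm tp φm φp tm tp = ∑ τ ∈ N.Tsk, ∑ i, r i τ * lm i τ := by
    rw [hfeas.2.ssTLin_eq (lm := lm) (lp := lp),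
      Finset.sum_eq_zero fun τ hτ => hlam.ssSurplus_self_eq_zero hτ, add_zero]
  have hother : ∑ τ ∈ N.Tsk, ∑ i, r i τ * lm i τ ≤ ssTLin N φm φp tm tp φm' φp' tm' tp' := by
    rw [hfeas'.2.ssTLin_eq (lm := lm) (lp := lp), le_add_iff_nonneg_right]
    exact Finset.sum_nonneg fun τ hτ => hlam.ssSurplus_nonneg hfeas.1 hfeas'.1 hfeas'.2 hτ
      (fun i => hsuff_m i τ hτ) (fun i => hsuff_p i τ hτ)
  linarith [ssT_add_ssTLin_sub_le hfeas hfeas']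

/-- **Theorem 1 (Sufficient optimality condition for single-step computations).**
If `(φ,t⁻,t⁺)` is feasible for `r` with marginal vectors `λ⁻, λ⁺`, and every used
data direction minimizes `δ⁻` over `{0} ∪ N(i)` while every used result direction
minimizes `δ⁺` over `N(i)`, then `(φ,t⁻,t⁺)` is globally optimal. -/
theorem sufficient_optimality_single_step
    (N : SSNet) (r : N.V → N.V × N.M → ℝ) (hr : ∀ i τ, 0 ≤ r i τ)
    (φm : N.V → Option N.V → N.V × N.M → ℝ) (φp : N.V → N.V → N.V × N.M → ℝ)
    (tm tp : N.V → N.V × N.M → ℝ) (lm lp : N.V → N.V × N.M → ℝ)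
    (hfeas : SSFeasible N r φm φp tm tp)
    (hlam : SSMarginal N φm φp tm tp lm lp)
    (hsuff_m : ∀ i, ∀ τ ∈ N.Tsk, ∀ j, SSAdm N i j → 0 < φm i j τ →
      ∀ j', SSAdm N i j' →
        ssDm N φm φp tm tp lm lp i τ j ≤ ssDm N φm φp tm tp lm lp i τ j')
    (hsuff_p : ∀ i, ∀ τ ∈ N.Tsk, ∀ j, N.E i j → 0 < φp i j τ →
      ∀ j', N.E i j' →
        ssDp N φm φp tm tp lp i j τ ≤ ssDp N φm φp tm tp lp i j' τ) :
    ∀ (φm' : N.V → Option N.V → N.V × N.M → ℝ) (φp' : N.V → N.V → N.V × N.M → ℝ)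
      (tm' tp' : N.V → N.V × N.M → ℝ),
      SSFeasible N r φm' φp' tm' tp' →
      ssT N φm φp tm tp ≤ ssT N φm' φp' tm' tp' :=
  sufficient_optimality_single_step_general N r φm φp tm tp lm lp hfeas hlam hsuff_m hsuff_p
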